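/- For formal power series f, g ∈ t·k[[t]], the induced linear maps on a quasi-shuffle algebra satisfy Ψ_f ∘ Ψ_g = Ψ_{f∘g}, where f∘g denotes composition of power series. -/

import Mathlib

/-!
Quasi-shuffle algebras (Hoffman–Ihara).  We model the span `kA` of the alphabet
(with its commutative associative product `⋄`, written `*` in `L`) as a
non-unital commutative `k`-algebra `L`, and the word algebra `k⟨A⟩` as the
tensor algebra `TensorAlgebra k L`, in which a word `a₁⋯aₙ` is the product
`ι a₁ * ⋯ * ι aₙ`.
-/

open TensorAlgebra

variable (k : Type*) [Field k]
variable {L : Type*} [NonUnitalCommRing L] [Module k L]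
  [SMulCommClass k L L] [IsScalarTower k L L]

/-- The word `a₁⋯aₙ` as an element of the tensor algebra. -/
def word (l : List L) : TensorAlgebra k L := (l.map fun a => TensorAlgebra.ι k a).prod

/-- The `⋄`-product of the letters of a nonempty block (junk value `0` on `[]`). -/
def blockProd : List L → L
  | [] => 0
  | a :: t => t.foldl (· * ·) a

/-- The Hoffman–Ihara operator `Ψ_f` on words, for `f = c₁t + c₂t² + ⋯`:
`Ψ_f(w) = Σ_{(i₁,…,i_m) composition of ℓ(w)} c_{i₁}⋯c_{i_m} I[w]`,
written via the recursion on the first block. -/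
def psi (c : ℕ → k) : List L → TensorAlgebra k L
  | [] => 1
  | a :: w => ∑ j ∈ Finset.range (w.length + 1),
      c (j + 1) • (TensorAlgebra.ι k (blockProd (a :: w.take j)) * psi c (w.drop j))
  termination_by l => l.length
  decreasing_by simp [List.length_drop] <;> omega

/-- Coefficients of the `m`-th power of the power series `g = Σ dₙ tⁿ`. -/
def powCoeff (d : ℕ → k) : ℕ → ℕ → k
  | 0, n => if n = 0 then 1 else 0
  | m + 1, n => ∑ p ∈ Finset.range (n + 1), powCoeff d m p * d (n - p)

/-- Coefficients of the composition `f ∘ g` of power series. -/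
def compCoeff (c d : ℕ → k) (n : ℕ) : k :=
  ∑ m ∈ Finset.range (n + 1), c m * powCoeff k d m n

/-!
Write `Ψ_{h,c}(x w)` (`psiHead`) for `Ψ_c(x w)` with the first block, of `i + 1` letters, weighted
by `h i` instead of `c (i + 1)`. When `Ψ_{h,f}(x ·)` is applied to `Ψ_g(w)`, expanded over the
compositions of `ℓ(w)`, the first block absorbs the first `i` blocks of `Ψ_g(w)` with weight `h i`;
summing up gives the coefficients of `h ∘ g`, i.e. `Ψ_{h,f}(x Ψ_g(w)) = Ψ_{h∘g,f∘g}(x w)`. This and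
`Ψ_f(Ψ_g(w)) = Ψ_{f∘g}(w)`, which follows from it by splitting off the first block of `Ψ_g(w)`, are
proved together by induction on `w`; the induction step is the identity
`h ∘ g = h 0 + g · (h' ∘ g)` for `h = h 0 + t h'`, which needs `g 0 = 0`.
-/

open Finset

theorem List.drop_induction {α : Type*} {P : List α → Prop} (nil : P [])
    (cons : ∀ a w, (∀ j, P (w.drop j)) → P (a :: w)) (w : List α) : P w := by
  suffices ∀ j, P (w.drop j) from this 0
  induction w with
  | nil => simpa using nil
  | cons a w ih =>
    rintro (_ | j)
    · exact cons a w ih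
    · exact ih j

theorem powCoeff_eq_zero_of_lt {d : ℕ → k} (hd : d 0 = 0) {m n : ℕ} (h : n < m) :
    powCoeff k d m n = 0 := by
  induction m generalizing n with
  | zero => omega
  | succ m ih =>
    rw [powCoeff]
    refine sum_eq_zero fun p hp => ?_
    rcases lt_or_ge p m with hpm | hpm
    · rw [ih hpm, zero_mul]
    · rw [mem_range] at hp
      rw [show n - p = 0 by omega, hd, mul_zero]

theorem powCoeff_succ_succ {d : ℕ → k} (hd : d 0 = 0) (m p : ℕ) :
    powCoeff k d (m + 1) (p + 1) = ∑ j ∈ range (p + 1), d (j + 1) * powCoeff k d m (p - j) := by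
  rw [powCoeff, sum_range_succ, Nat.sub_self, hd, mul_zero, add_zero, ← sum_range_reflect]
  refine sum_congr rfl fun j hj => ?_
  rw [mem_range] at hj
  rw [mul_comm, show p + 1 - 1 - j = p - j by omega, show p + 1 - (p - j) = j + 1 by omega]

theorem compCoeff_zero (h d : ℕ → k) : compCoeff k h d 0 = h 0 := by
  simp [compCoeff, powCoeff]

/-- The coefficient form of `h ∘ g = h 0 + g · (h' ∘ g)`, where `h = h 0 + t h'`. -/
theorem compCoeff_succ (h : ℕ → k) {d : ℕ → k} (hd : d 0 = 0) (p : ℕ) :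
    compCoeff k h d (p + 1)
      = ∑ j ∈ range (p + 1), d (j + 1) * compCoeff k (fun i => h (i + 1)) d (p - j) := by
  have extend : ∀ j ∈ range (p + 1), compCoeff k (fun i => h (i + 1)) d (p - j)
      = ∑ i ∈ range (p + 1), h (i + 1) * powCoeff k d i (p - j) := fun j _ =>
    sum_subset (range_subset_range.2 (by omega)) fun i _ hi => by
      rw [mem_range, not_lt] at hi
      rw [powCoeff_eq_zero_of_lt k hd (by omega), mul_zero]
  rw [compCoeff, sum_range_succ', powCoeff, if_neg p.succ_ne_zero, mul_zero, add_zero]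
  simp_rw [powCoeff_succ_succ k hd, mul_sum]
  rw [sum_comm]
  refine sum_congr rfl fun j hj => ?_
  rw [extend j hj, mul_sum]
  exact sum_congr rfl fun i _ => by ring

section

variable {A : Type*} [NonUnitalCommRing A]

theorem mul_blockProd_cons (x y : A) (l : List A) :
    x * blockProd (y :: l) = blockProd (x * y :: l) := by
  induction l generalizing y with
  | nil => rfl
  | cons z l ih => exact (ih (y * z)).trans (by rw [← mul_assoc]; rfl)

theorem blockProd_cons_blockProd_cons (x : A) (l m : List A) :
    blockProd (blockProd (x :: l) :: m) = blockProd (x :: (l ++ m)) := by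
  simp only [blockProd, List.foldl_append]

/-- `compositionSum k d φ w = Σ_I d_{i₁} ⋯ d_{i_m} φ(I[w])` over the compositions `I` of `ℓ(w)`,
that is, `φ` applied linearly to `Ψ_g(w)`; this makes sense for `φ` defined only on words. -/
def compositionSum {M : Type*} [AddCommMonoid M] [Module k M] (d : ℕ → k) (φ : List A → M) :
    List A → M
  | [] => φ []
  | a :: w => ∑ j ∈ range (w.length + 1),
      d (j + 1) • compositionSum d (fun q => φ (blockProd (a :: w.take j) :: q)) (w.drop j)
  termination_by w => w.length
  decreasing_by simp only [List.length_drop, List.length_cons]; omega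

section compositionSum

variable {M N : Type*} [AddCommMonoid M] [Module k M] [AddCommMonoid N] [Module k N]
  (d : ℕ → k)

theorem compositionSum_nil (φ : List A → M) : compositionSum k d φ [] = φ [] := by
  rw [compositionSum]

theorem compositionSum_cons (φ : List A → M) (a : A) (w : List A) :
    compositionSum k d φ (a :: w) = ∑ j ∈ range (w.length + 1),
      d (j + 1) • compositionSum k d (fun q => φ (blockProd (a :: w.take j) :: q)) (w.drop j) := by
  rw [compositionSum]

theorem map_compositionSum (T : M →ₗ[k] N) (φ : List A → M) (w : List A) :
    T (compositionSum k d φ w) = compositionSum k d (fun q => T (φ q)) w := by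
  induction w using List.drop_induction generalizing φ with
  | nil => simp only [compositionSum_nil]
  | cons a w ih => simp only [compositionSum_cons, map_sum, map_smul, ih]

theorem compositionSum_add (φ ψ : List A → M) (w : List A) :
    compositionSum k d (fun q => φ q + ψ q) w
      = compositionSum k d φ w + compositionSum k d ψ w := by
  induction w using List.drop_induction generalizing φ ψ with
  | nil => simp only [compositionSum_nil]
  | cons a w ih => simp only [compositionSum_cons, ih, smul_add, sum_add_distrib]

end compositionSum

variable [Module k A]

@[simp] theorem word_nil : word k ([] : List A) = 1 := by simp [word]

@[simp] theorem word_cons (a : A) (l : List A) : word k (a :: l) = ι k a * word k l := by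
  simp [word]

theorem word_append (l m : List A) : word k (l ++ m) = word k l * word k m := by
  simp [word]

theorem span_range_word :
    Submodule.span k (Set.range (word k : List A → TensorAlgebra k A)) = ⊤ := by
  set S := Submodule.span k (Set.range (word k : List A → TensorAlgebra k A))
  have one_mem : (1 : TensorAlgebra k A) ∈ S := Submodule.subset_span ⟨[], word_nil k⟩
  have mul_mem : ∀ x y, x ∈ S → y ∈ S → x * y ∈ S := by
    have : S * S ≤ S := by
      rw [Submodule.span_mul_span]
      refine Submodule.span_mono ?_
      rintro _ ⟨_, ⟨l, rfl⟩, _, ⟨m, rfl⟩, rfl⟩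
      exact ⟨l ++ m, word_append k l m⟩
    exact fun x y hx hy => this (Submodule.mul_mem_mul hx hy)
  have : Algebra.adjoin k (Set.range (ι k)) ≤ S.toSubalgebra one_mem mul_mem :=
    Algebra.adjoin_le (by rintro _ ⟨a, rfl⟩; exact Submodule.subset_span ⟨[a], by simp⟩)
  rw [TensorAlgebra.adjoin_range_ι] at this
  exact eq_top_iff.2 fun x _ => this Algebra.mem_top

theorem map_mul_psi {M : Type*} [AddCommMonoid M] [Module k M] (d : ℕ → k)
    (T : TensorAlgebra k A →ₗ[k] M) (x : TensorAlgebra k A) (w : List A) :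
    T (x * psi k d w) = compositionSum k d (fun q => T (x * word k q)) w := by
  induction w using List.drop_induction generalizing x with
  | nil => rw [psi, compositionSum_nil, word_nil]
  | cons a w ih =>
    rw [psi, compositionSum_cons, mul_sum, map_sum]
    refine sum_congr rfl fun j _ => ?_
    simp only [mul_smul_comm, map_smul, ← mul_assoc, ih, word_cons]

def psiHead (h c : ℕ → k) (x : A) (w : List A) : TensorAlgebra k A :=
  ∑ i ∈ range (w.length + 1), h i • (ι k (blockProd (x :: w.take i)) * psi k c (w.drop i))

theorem psi_cons (c : ℕ → k) (a : A) (w : List A) :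
    psi k c (a :: w) = psiHead k (fun i => c (i + 1)) c a w := by
  rw [psi, psiHead]

theorem psiHead_cons (h c : ℕ → k) (x y : A) (w : List A) :
    psiHead k h c x (y :: w)
      = h 0 • (ι k x * psi k c (y :: w)) + psiHead k (fun i => h (i + 1)) c (x * y) w := by
  rw [psiHead, List.length_cons, sum_range_succ', add_comm]
  rfl

theorem sum_smul_psiHead_blockProd {d : ℕ → k} (hd : d 0 = 0) (h e : ℕ → k) (z : A)
    (t : List A) :
    ∑ j ∈ range (t.length + 1), d (j + 1) •
        psiHead k (compCoeff k (fun i => h (i + 1)) d) e (blockProd (z :: t.take j)) (t.drop j)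
      = psiHead k (fun p => compCoeff k h d (p + 1)) e z t := by
  set C := compCoeff k (fun i => h (i + 1)) d
  set T : ℕ → TensorAlgebra k A := fun p => ι k (blockProd (z :: t.take p)) * psi k e (t.drop p)
  have merge : ∀ j s, ι k (blockProd (blockProd (z :: t.take j) :: (t.drop j).take s))
      * psi k e ((t.drop j).drop s) = T (j + s) := fun j s => by
    rw [blockProd_cons_blockProd_cons, ← List.take_add, List.drop_drop]
  calc _ = ∑ j ∈ range (t.length + 1), ∑ s ∈ range (t.length + 1 - j),
        (d (j + 1) * C s) • T (j + s) := by
        refine sum_congr rfl fun j hj => ?_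
        rw [mem_range] at hj
        rw [psiHead, smul_sum, List.length_drop, show t.length - j + 1 = t.length + 1 - j by omega]
        simp only [merge, smul_smul]
    _ = ∑ p ∈ range (t.length + 1), ∑ j ∈ range (p + 1),
        (d (j + 1) * C (p - j)) • T (j + (p - j)) :=
      (sum_range_diag_flip _ fun j s => (d (j + 1) * C s) • T (j + s)).symm
    _ = _ := by
      refine sum_congr rfl fun p _ => ?_
      beta_reduce
      rw [compCoeff_succ k h hd, sum_smul]
      refine sum_congr rfl fun j hj => ?_
      rw [mem_range] at hj
      rw [Nat.add_sub_cancel' (by omega)]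

theorem compositionSum_psi_cons {d : ℕ → k} (hd : d 0 = 0) (c : ℕ → k) (a : A) (t : List A)
    (ih : ∀ j h x, compositionSum k d (psiHead k h c x) (t.drop j)
      = psiHead k (compCoeff k h d) (compCoeff k c d) x (t.drop j)) :
    compositionSum k d (psi k c) (a :: t) = psi k (compCoeff k c d) (a :: t) := by
  rw [compositionSum_cons]
  simp only [psi_cons, ih]
  exact sum_smul_psiHead_blockProd k hd c _ a t

theorem compositionSum_psiHead {d : ℕ → k} (hd : d 0 = 0) (c h : ℕ → k) (x : A) (w : List A) :
    compositionSum k d (psiHead k h c x) w = psiHead k (compCoeff k h d) (compCoeff k c d) x w := by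
  induction w using List.drop_induction generalizing h x with
  | nil => simp [compositionSum_nil, psiHead, compCoeff_zero, psi]
  | cons b t ih =>
    calc compositionSum k d (psiHead k h c x) (b :: t)
        = h 0 • (ι k x * compositionSum k d (psi k c) (b :: t))
          + ∑ j ∈ range (t.length + 1), d (j + 1) • compositionSum k d
              (psiHead k (fun i => h (i + 1)) c (x * blockProd (b :: t.take j))) (t.drop j) := by
          rw [compositionSum_cons, compositionSum_cons, mul_sum, smul_sum, ← sum_add_distrib]
          refine sum_congr rfl fun j _ => ?_
          simp only [psiHead_cons, compositionSum_add, smul_add]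
          have := map_compositionSum k d (h 0 • LinearMap.mulLeft k (ι k x))
            (fun q => psi k c (blockProd (b :: t.take j) :: q)) (t.drop j)
          simp only [LinearMap.smul_apply, LinearMap.mulLeft_apply] at this
          rw [mul_smul_comm, smul_comm (h 0), this]
      _ = h 0 • (ι k x * psi k (compCoeff k c d) (b :: t))
          + psiHead k (fun p => compCoeff k h d (p + 1)) (compCoeff k c d) (x * b) t := by
        rw [compositionSum_psi_cons k hd c b t ih]
        simp only [ih, mul_blockProd_cons]
        rw [sum_smul_psiHead_blockProd k hd]
      _ = _ := by rw [psiHead_cons, compCoeff_zero]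

theorem compositionSum_psi {d : ℕ → k} (hd : d 0 = 0) (c : ℕ → k) (w : List A) :
    compositionSum k d (psi k c) w = psi k (compCoeff k c d) w := by
  cases w with
  | nil => rw [compositionSum_nil, psi, psi]
  | cons a t =>
    exact compositionSum_psi_cons k hd c a t fun j h x => compositionSum_psiHead k hd c h x _

end

theorem stmt4 (c d : ℕ → k) (hd : d 0 = 0)
    (F G H : TensorAlgebra k L →ₗ[k] TensorAlgebra k L)
    (hF : ∀ w : List L, F (word k w) = psi k c w)
    (hG : ∀ w : List L, G (word k w) = psi k d w)
    (hH : ∀ w : List L, H (word k w) = psi k (compCoeff k c d) w) :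
    ∀ x : TensorAlgebra k L, F (G x) = H x := by
  suffices F ∘ₗ G = H from LinearMap.congr_fun this
  refine LinearMap.ext_on_range (span_range_word k) fun w => ?_
  rw [LinearMap.comp_apply, hG, hH, ← one_mul (psi k d w), map_mul_psi]
  simp only [one_mul, hF]
  exact compositionSum_psi k hd c w
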